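/- arXiv:2110.08722 — 6 statements merged into one kernel-verified Lean document; each statement's English description precedes it below -/
import Mathlib

section
/- Let n ≥ 1 and let f : I^n → ℝ be a function. Suppose that for every isometric affine embedding ℓ : I → I^n (i.e. ℓ(t) = p + t·v with ‖v‖ = 1 and ℓ(I) ⊆ I^n), the composition f ∘ ℓ : I → ℝ is affine. Then f itself is affine on I^n, i.e. there exist c ∈ ℝ^n and b ∈ ℝ with f(x) = ⟨c, x⟩ + b for all x ∈ I^n. -/
open Real

/-- The open cube (−π, π)^n in ℝ^n. -/
def Icube (n : ℕ) : Set (EuclideanSpace ℝ (Fin n)) :=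
  {x | ∀ i, x i ∈ Set.Ioo (-π) π}

lemma aux_sumsq {n : ℕ} (v : EuclideanSpace ℝ (Fin n)) : ∑ i, (v i)^2 = ‖v‖^2 := by
  rw [EuclideanSpace.norm_eq, Real.sq_sqrt (by positivity)]; simp [Real.norm_eq_abs, sq_abs]

lemma aux_coord {n : ℕ} (x : EuclideanSpace ℝ (Fin n)) (i : Fin n) : |x i| ≤ ‖x‖ := by
  have h1 : (x i)^2 ≤ ‖x‖^2 := by
    rw [← aux_sumsq]
    exact Finset.single_le_sum (f := fun j => (x j)^2) (fun j _ => sq_nonneg _) (Finset.mem_univ i)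
  have := Real.sqrt_le_sqrt h1
  rwa [Real.sqrt_sq_eq_abs, Real.sqrt_sq (norm_nonneg x)] at this

lemma aux_repr {n : ℕ} (x : EuclideanSpace ℝ (Fin n)) :
    x = ∑ i, x i • EuclideanSpace.single i (1:ℝ) := by
  ext j
  rw [show (∑ i, x i • EuclideanSpace.single i (1:ℝ)) j
      = ∑ i, (x i • EuclideanSpace.single i (1:ℝ)) j by rw [WithLp.ofLp_sum, Finset.sum_apply]]
  simp [EuclideanSpace.single_apply]

set_option maxHeartbeats 1000000 in
/-- If the restriction of f : I^n → ℝ to every unit-speed affine segment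
contained in I^n is affine, then f is affine on I^n. -/
theorem stmt_2 (n : ℕ) (hn : 1 ≤ n) (f : EuclideanSpace ℝ (Fin n) → ℝ)
    (h : ∀ p v : EuclideanSpace ℝ (Fin n), ‖v‖ = 1 →
      (∀ t ∈ Set.Ioo (-π) π, p + t • v ∈ Icube n) →
      ∃ a b : ℝ, ∀ t ∈ Set.Ioo (-π) π, f (p + t • v) = a * t + b) :
    ∃ (c : EuclideanSpace ℝ (Fin n)) (b : ℝ), ∀ x ∈ Icube n,
      f x = (inner ℝ c x : ℝ) + b := by
  have hπ : (0:ℝ) < π := Real.pi_pos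
  have hn1 : (1:ℝ) ≤ (n:ℝ) := by exact_mod_cast hn
  have hvle : ∀ v : EuclideanSpace ℝ (Fin n), ‖v‖ = 1 → ∀ i, |v i| ≤ 1 := by
    intro v hv i
    simpa [hv] using aux_coord v i
  -- ============ homogeneity along rays through the origin ============
  have hom : ∀ z : EuclideanSpace ℝ (Fin n), ‖z‖ < π → ∀ t : ℝ, |t| ≤ 1 →
      f (t • z) = t * (f z - f 0) + f 0 := by
    intro z hz t ht
    rcases eq_or_ne z 0 with rfl | hz0
    · simp
    · have hnz : (0:ℝ) < ‖z‖ := norm_pos_iff.2 hz0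
      set v := ‖z‖⁻¹ • z with hvdef
      have hv : ‖v‖ = 1 := by
        rw [hvdef, norm_smul, Real.norm_eq_abs, abs_of_pos (inv_pos.2 hnz)]
        exact inv_mul_cancel₀ (ne_of_gt hnz)
      have hval : ∀ t' ∈ Set.Ioo (-π) π, (0:ℝ) • v + t' • v ∈ Icube n := by
        intro t' ht' i
        have hti : |t'| < π := abs_lt.2 ⟨ht'.1, ht'.2⟩
        have happ : ((0:ℝ) • v + t' • v) i = t' * v i := by
          simp [PiLp.add_apply, PiLp.smul_apply, smul_eq_mul]
        rw [Set.mem_Ioo, ← abs_lt, happ, abs_mul]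
        have h5 : |t'| * |v i| ≤ |t'| * 1 := mul_le_mul_of_nonneg_left (hvle v hv i) (abs_nonneg t')
        linarith
      obtain ⟨a, b, hab⟩ := h ((0:ℝ) • v) v hv hval
      have key : ∀ s : ℝ, |s| < π → f (s • v) = a * s + b := by
        intro s hs
        have h1 := hab s (Set.mem_Ioo.2 (abs_lt.1 hs))
        have h2 : (0:ℝ) • v + s • v = s • v := by module
        rwa [h2] at h1
      have h0 : f 0 = b := by
        have := key 0 (by simpa using hπ)
        simpa using this
      have hzrw : z = ‖z‖ • v := by
        rw [hvdef, smul_smul, mul_inv_cancel₀ (ne_of_gt hnz), one_smul]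
      have hz1 : f z = a * ‖z‖ + b := by
        have := key ‖z‖ (by rwa [abs_of_pos hnz])
        rwa [← hzrw] at this
      have ht1 : f (t • z) = a * (t * ‖z‖) + b := by
        have heq : (t * ‖z‖) • v = t • z := by rw [mul_smul, ← hzrw]
        rw [← heq]
        apply key
        rw [abs_mul, abs_of_pos hnz]
        calc |t| * ‖z‖ ≤ 1 * ‖z‖ := mul_le_mul_of_nonneg_right ht (le_of_lt hnz)
          _ < π := by simpa using hz
      rw [ht1, hz1, ← h0]; ring
  -- ============ the small scale ρ ============
  set ρ : ℝ := π / (8 * n) with hρdef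
  have hρ : 0 < ρ := by positivity
  have hρ8 : ρ ≤ π / 8 := by
    rw [hρdef, div_le_div_iff₀ (by positivity) (by norm_num)]
    nlinarith
  -- ============ midpoint property at small scale ============
  have mid : ∀ x y : EuclideanSpace ℝ (Fin n), ‖x‖ < ρ → ‖y‖ < ρ →
      f x + f y = 2 * f ((1/2 : ℝ) • (x + y)) := by
    intro x y hx hy
    rcases eq_or_ne x y with rfl | hxy
    · have hxx : (1/2 : ℝ) • (x + x) = x := by module
      rw [hxx]; ring
    · set m := (1/2 : ℝ) • (x + y) with hmdef
      have hd : 0 < ‖x - y‖ := norm_pos_iff.2 (sub_ne_zero.2 hxy)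
      set d := ‖x - y‖ with hddef
      set v := d⁻¹ • (x - y) with hvdef
      have hv : ‖v‖ = 1 := by
        rw [hvdef, norm_smul, Real.norm_eq_abs, abs_of_pos (inv_pos.2 hd)]
        exact inv_mul_cancel₀ (ne_of_gt hd)
      set s := d / 2 with hsdef
      have hs : s < ρ := by
        have : d ≤ ‖x‖ + ‖y‖ := norm_sub_le x y
        rw [hsdef]; linarith
      have hs0 : 0 < s := by rw [hsdef]; linarith
      have hsv : s • v = (1/2 : ℝ) • (x - y) := by
        rw [hvdef, smul_smul]
        congr 1
        field_simp
        rw [hsdef]; ring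
      have hmx : m + s • v = x := by rw [hmdef, hsv]; module
      have hmy : m + (-s) • v = y := by
        have : (-s) • v = (-(1/2) : ℝ) • (x - y) := by
          rw [neg_smul, hsv]; module
        rw [hmdef, this]; module
      have hmn : ‖m‖ < ρ := by
        have h1 : ‖m‖ = (1/2) * ‖x + y‖ := by
          rw [hmdef, norm_smul, Real.norm_eq_abs]
          norm_num
        have h2 := norm_add_le x y
        rw [h1]; linarith
      obtain ⟨i0, -, hi0⟩ := Finset.exists_max_image Finset.univ (fun i => |v i|)
        ⟨⟨0, hn⟩, Finset.mem_univ _⟩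
      have hsumv : ∑ i, (v i)^2 = 1 := by rw [aux_sumsq, hv]; norm_num
      have hu0 : 0 < |v i0| := by
        rcases lt_or_ge 0 (|v i0|) with h' | h'
        · exact h'
        · exfalso
          have hall : ∀ j, v j = 0 := by
            intro j
            have := hi0 j (Finset.mem_univ j)
            have : |v j| ≤ 0 := le_trans this h'
            exact abs_eq_zero.1 (le_antisymm this (abs_nonneg _))
          have : v = 0 := by
            ext j; exact hall j
          rw [this] at hv; simp at hv
      have hu0n : 1 ≤ (n:ℝ) * |v i0|^2 := by
        have h1 : ∑ i, (v i)^2 ≤ ∑ _i : Fin n, |v i0|^2 :=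
          Finset.sum_le_sum fun i _ => by
            calc (v i)^2 = |v i|^2 := (sq_abs _).symm
              _ ≤ |v i0|^2 := pow_le_pow_left₀ (abs_nonneg _) (hi0 i (Finset.mem_univ i)) 2
        rw [Finset.sum_const, Finset.card_univ, Fintype.card_fin, nsmul_eq_mul] at h1
        rw [hsumv] at h1
        exact h1
      have hu1 : |v i0| ≤ 1 := by simpa [hv] using aux_coord v i0
      have hvi0ne : v i0 ≠ 0 := by
        intro hz
        rw [hz] at hu0; simp at hu0
      set σ : ℝ := -(m i0) / (v i0) with hσdef
      have hσv : σ * v i0 = -(m i0) := by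
        rw [hσdef]
        field_simp
      have hmi0 : |m i0| < ρ := lt_of_le_of_lt (aux_coord m i0) hmn
      have hσb : |σ| ≤ π / 8 := by
        have h1 : |σ| * |v i0| = |m i0| := by
          rw [← abs_mul, hσv, abs_neg]
        by_contra hc
        push_neg at hc
        have e1 : (π/8) * |v i0| ≤ |m i0| := by
          rw [← h1]
          exact mul_le_mul_of_nonneg_right (le_of_lt hc) (abs_nonneg _)
        have e2 : (π/8) * |v i0| < π / (8*n) := by
          rw [hρdef] at hmi0
          exact lt_of_le_of_lt e1 hmi0
        have hn0 : (0:ℝ) < 8*n := by positivity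
        have e3' := mul_lt_mul_of_pos_right e2 hn0
        rw [div_mul_cancel₀ _ (ne_of_gt hn0)] at e3'
        generalize hugen : |v i0| = u at e3' hu0n hu0 hu1
        have e3 : (n:ℝ) * u < 1 := by nlinarith [hπ]
        nlinarith [e3, hu0n, hu0, hu1]
      -- validity of the segment through p = m + σ • v
      have hvalid : ∀ t ∈ Set.Ioo (-π) π, (m + σ • v) + t • v ∈ Icube n := by
        intro t ht i
        have hti : |t| < π := abs_lt.2 ⟨ht.1, ht.2⟩
        have happ : ((m + σ • v) + t • v) i = m i + σ * v i + t * v i := by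
          simp [PiLp.add_apply, PiLp.smul_apply, smul_eq_mul]
        rw [Set.mem_Ioo, ← abs_lt, happ]
        rcases eq_or_ne i i0 with rfl | hne
        · have heq0 : m i + σ * v i + t * v i = t * v i := by rw [hσv]; ring
          rw [heq0, abs_mul]
          have h5 : |t| * |v i| ≤ |t| * 1 := mul_le_mul_of_nonneg_left hu1 (abs_nonneg t)
          linarith
        · have pair : (v i)^2 + (v i0)^2 ≤ 1 := by
            have hsub : ({i, i0} : Finset (Fin n)) ⊆ Finset.univ := Finset.subset_univ _
            have h2 := Finset.sum_le_sum_of_subset_of_nonneg hsub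
              (fun j _ _ => sq_nonneg (v j))
            rw [Finset.sum_pair hne, hsumv] at h2
            exact h2
          have hvi : |v i| ≤ 3/4 := by
            have h3 : (v i)^2 ≤ (v i0)^2 := by
              rw [← sq_abs (v i), ← sq_abs (v i0)]
              exact pow_le_pow_left₀ (abs_nonneg _) (hi0 i (Finset.mem_univ i)) 2
            have h4 : |v i|^2 ≤ 1/2 := by rw [sq_abs]; linarith
            generalize hw : |v i| = w at h4 ⊢
            nlinarith [abs_nonneg (v i), hw]
          have hb1 : |m i| ≤ ρ := le_of_lt (lt_of_le_of_lt (aux_coord m i) hmn)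
          have hb2 : |σ * v i| ≤ (π/8) * (3/4) := by
            rw [abs_mul]
            exact mul_le_mul hσb hvi (abs_nonneg _) (by positivity)
          have hb3 : |t * v i| ≤ π * (3/4) := by
            rw [abs_mul]
            exact mul_le_mul (le_of_lt hti) hvi (abs_nonneg _) (le_of_lt hπ)
          calc |m i + σ * v i + t * v i| ≤ |m i + σ * v i| + |t * v i| := abs_add_le _ _
            _ ≤ |m i| + |σ * v i| + |t * v i| := by linarith [abs_add_le (m i) (σ * v i)]
            _ ≤ ρ + (π/8) * (3/4) + π * (3/4) := by linarith
            _ < π := by linarith [hρ8, hπ]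
      obtain ⟨a, b, hab⟩ := h (m + σ • v) v hv hvalid
      have hwin : ∀ q : ℝ, |q| ≤ π/4 → f (m + q • v) = a * (q - σ) + b := by
        intro q hq
        have heq : m + q • v = (m + σ • v) + (q - σ) • v := by module
        rw [heq]
        apply hab
        constructor
        · linarith [(abs_le.1 hq).1, (abs_le.1 hσb).1, (abs_le.1 hq).2, (abs_le.1 hσb).2]
        · linarith [(abs_le.1 hq).1, (abs_le.1 hσb).1, (abs_le.1 hq).2, (abs_le.1 hσb).2]
      have hspi : s ≤ π/4 := by linarith [hρ8]
      have hfx : f x = a * (s - σ) + b := by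
        rw [← hmx]; exact hwin s (by rw [abs_of_pos hs0]; linarith)
      have hfy : f y = a * (-s - σ) + b := by
        rw [← hmy]; exact hwin (-s) (by rw [abs_neg, abs_of_pos hs0]; linarith)
      have hfm : f m = a * (0 - σ) + b := by
        have := hwin 0 (by rw [abs_zero]; positivity)
        simpa using this
      rw [hfx, hfy, hfm]; ring
  -- ============ additivity at small scale ============
  have addf : ∀ x y : EuclideanSpace ℝ (Fin n), ‖x‖ < ρ → ‖y‖ < ρ →
      f (x + y) = f x + f y - f 0 := by
    intro x y hx hy
    have h1 := mid x y hx hy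
    have h2 : f ((1/2 : ℝ) • (x + y)) = (1/2) * (f (x + y) - f 0) + f 0 := by
      apply hom
      · calc ‖x + y‖ ≤ ‖x‖ + ‖y‖ := norm_add_le _ _
          _ < π := by linarith [hρ8, hπ]
      · rw [abs_of_pos] <;> norm_num
    rw [h2] at h1
    linarith
  -- ============ the linear coefficient ============
  set ρ' : ℝ := ρ / 2 with hρ'def
  have hρ' : 0 < ρ' := by rw [hρ'def]; linarith
  set c : EuclideanSpace ℝ (Fin n) :=
    WithLp.toLp 2 (fun i => (f (ρ' • EuclideanSpace.single i (1:ℝ)) - f 0) / ρ') with hcdef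
  have hcoord : ∀ (i : Fin n) (xi : ℝ), |xi| ≤ ρ' →
      f (xi • EuclideanSpace.single i (1:ℝ)) = xi * c i + f 0 := by
    intro i xi hxi
    have hz : ‖(ρ' • EuclideanSpace.single i (1:ℝ) : EuclideanSpace ℝ (Fin n))‖ = ρ' := by
      rw [norm_smul, EuclideanSpace.norm_single, Real.norm_eq_abs, abs_of_pos hρ']
      simp
    have ht : |xi / ρ'| ≤ 1 := by
      rw [abs_div, abs_of_pos hρ', div_le_one hρ']
      exact hxi
    have heq : (xi / ρ') • (ρ' • EuclideanSpace.single i (1:ℝ)) =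
        xi • EuclideanSpace.single i (1:ℝ) := by
      rw [smul_smul]
      congr 1
      field_simp
    have hres := hom (ρ' • EuclideanSpace.single i (1:ℝ))
      (by rw [hz]; linarith [hρ8]) (xi / ρ') ht
    rw [heq] at hres
    rw [hres]
    have hci : c i = (f (ρ' • EuclideanSpace.single i (1:ℝ)) - f 0) / ρ' := by rw [hcdef]
    rw [hci]
    field_simp
  -- ============ affine on coordinate small cube ============
  have hsmall : ∀ x : EuclideanSpace ℝ (Fin n), (∀ i, |x i| ≤ ρ / (2*n)) →
      f x = (∑ i, x i * c i) + f 0 := by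
    intro x hx
    have hb : ρ / (2*n) ≤ ρ' := by
      rw [hρ'def, div_le_div_iff₀ (by positivity) (by norm_num)]
      nlinarith
    have key : ∀ s : Finset (Fin n),
        f (∑ i ∈ s, x i • EuclideanSpace.single i (1:ℝ)) = (∑ i ∈ s, x i * c i) + f 0 := by
      intro s
      induction s using Finset.induction_on with
      | empty => simp
      | @insert a s ha ih =>
        rw [Finset.sum_insert ha, Finset.sum_insert ha]
        have hnorm_s : ‖∑ i ∈ s, x i • EuclideanSpace.single i (1:ℝ)‖ < ρ := by
          calc ‖∑ i ∈ s, x i • EuclideanSpace.single i (1:ℝ)‖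
              ≤ ∑ i ∈ s, ‖x i • EuclideanSpace.single i (1:ℝ)‖ := norm_sum_le _ _
            _ = ∑ i ∈ s, |x i| := by
                apply Finset.sum_congr rfl
                intro i _
                rw [norm_smul, EuclideanSpace.norm_single, Real.norm_eq_abs]
                simp
            _ ≤ ∑ _i ∈ s, ρ / (2*n) := Finset.sum_le_sum fun i _ => hx i
            _ = s.card * (ρ / (2*n)) := by rw [Finset.sum_const, nsmul_eq_mul]
            _ ≤ n * (ρ / (2*n)) := by
                have hcard : (s.card : ℝ) ≤ n := by
                  exact_mod_cast le_trans (Finset.card_le_univ s)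
                    (le_of_eq (by simp))
                exact mul_le_mul_of_nonneg_right hcard (by positivity)
            _ = ρ / 2 := by field_simp
            _ < ρ := by linarith
        have hnorm_a : ‖x a • EuclideanSpace.single a (1:ℝ)‖ < ρ := by
          rw [norm_smul, EuclideanSpace.norm_single, Real.norm_eq_abs]
          simp only [norm_one, mul_one]
          calc |x a| ≤ ρ / (2*n) := hx a
            _ < ρ := by
                rw [div_lt_iff₀ (by positivity)]
                nlinarith
        rw [addf _ _ hnorm_a hnorm_s, ih, hcoord a (x a) (le_trans (hx a) hb)]
        ring
    have := key Finset.univ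
    rwa [← aux_repr x] at this
  -- ============ inner product formula ============
  have hinner : ∀ x : EuclideanSpace ℝ (Fin n), (inner ℝ c x : ℝ) = ∑ i, x i * c i := by
    intro x
    rw [PiLp.inner_apply]
    exact Finset.sum_congr rfl fun i _ => by
      simp [RCLike.inner_apply, mul_comm]
  -- ============ main extension along rays ============
  refine ⟨c, f 0, ?_⟩
  intro x hxcube
  rcases eq_or_ne x 0 with rfl | hx0
  · simp
  · have hR : 0 < ‖x‖ := norm_pos_iff.2 hx0
    set R : ℝ := ‖x‖ with hRdef
    set v : EuclideanSpace ℝ (Fin n) := R⁻¹ • x with hvdef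
    have hv : ‖v‖ = 1 := by
      rw [hvdef, norm_smul, Real.norm_eq_abs, abs_of_pos (inv_pos.2 hR)]
      exact inv_mul_cancel₀ (ne_of_gt hR)
    have hvi : ∀ i, v i = R⁻¹ * x i := by
      intro i
      rw [hvdef]
      simp [PiLp.smul_apply, smul_eq_mul]
    set C : ℝ := ∑ i, v i * c i with hCdef
    obtain ⟨i1, -, hi1⟩ := Finset.exists_max_image Finset.univ (fun i => |x i|)
      ⟨⟨0, hn⟩, Finset.mem_univ _⟩
    set M : ℝ := |x i1| with hMdef
    have hM0 : 0 < M := by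
      rcases lt_or_ge 0 M with h' | h'
      · exact h'
      · exfalso
        apply hx0
        ext j
        have := hi1 j (Finset.mem_univ j)
        have : |x j| ≤ 0 := le_trans this h'
        simpa using abs_eq_zero.1 (le_antisymm this (abs_nonneg _))
    have hMπ : M < π := by
      rw [hMdef, abs_lt]
      exact ⟨(hxcube i1).1, (hxcube i1).2⟩
    have hMR : M ≤ R := aux_coord x i1
    -- validity of shifted segments along the ray
    have hval : ∀ σ : ℝ, 0 ≤ σ → (σ + π) * M ≤ π * R →
        ∀ t ∈ Set.Ioo (-π) π, σ • v + t • v ∈ Icube n := by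
      intro σ hσ0 hσM t ht i
      have hti : |t| < π := abs_lt.2 ⟨ht.1, ht.2⟩
      have happ : (σ • v + t • v) i = (σ + t) * (R⁻¹ * x i) := by
        simp [PiLp.add_apply, PiLp.smul_apply, smul_eq_mul, hvi]
        ring
      rw [Set.mem_Ioo, ← abs_lt, happ]
      rcases eq_or_ne (x i) 0 with hz | hz
      · rw [hz]
        simpa using hπ
      · rw [abs_mul, abs_mul, abs_of_pos (inv_pos.2 hR)]
        have h1 : |σ + t| < σ + π := by
          calc |σ + t| ≤ |σ| + |t| := abs_add_le _ _
            _ = σ + |t| := by rw [abs_of_nonneg hσ0]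
            _ < σ + π := by linarith
        have h2 : |x i| ≤ M := hi1 i (Finset.mem_univ i)
        have h3 : (σ + π) * |x i| ≤ π * R :=
          le_trans (mul_le_mul_of_nonneg_left h2 (by positivity)) hσM
        have h4 : (σ + π) * |x i| * R⁻¹ ≤ π * R * R⁻¹ :=
          mul_le_mul_of_nonneg_right h3 (le_of_lt (inv_pos.2 hR))
        have h5 : π * R * R⁻¹ = π := by field_simp
        calc |σ + t| * (R⁻¹ * |x i|)
            < (σ + π) * (R⁻¹ * |x i|) := by
              apply mul_lt_mul_of_pos_right h1
              positivity
          _ = (σ + π) * |x i| * R⁻¹ := by ring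
          _ ≤ π * R * R⁻¹ := h4
          _ = π := h5
    -- base case : small multiples of v
    have base : ∀ s : ℝ, 0 ≤ s → s ≤ ρ / (2*n) → f (s • v) = s * C + f 0 := by
      intro s h0 h1
      have hxs : ∀ i, |(s • v : EuclideanSpace ℝ (Fin n)) i| ≤ ρ / (2*n) := by
        intro i
        have happ : (s • v : EuclideanSpace ℝ (Fin n)) i = s * v i := by
          simp [PiLp.smul_apply, smul_eq_mul]
        rw [happ, abs_mul, abs_of_nonneg h0]
        calc s * |v i| ≤ s * 1 := mul_le_mul_of_nonneg_left (hvle v hv i) h0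
          _ = s := mul_one s
          _ ≤ ρ / (2*n) := h1
      rw [hsmall (s • v) hxs, hCdef, Finset.mul_sum]
      congr 1
      apply Finset.sum_congr rfl
      intro i _
      have happ : (s • v : EuclideanSpace ℝ (Fin n)) i = s * v i := by
        simp [PiLp.smul_apply, smul_eq_mul]
      rw [happ]; ring
    -- induction along the ray
    have ind : ∀ k : ℕ, ∀ s : ℝ, 0 ≤ s → s ≤ R → s ≤ (k:ℝ) * (π/2) →
        f (s • v) = s * C + f 0 := by
      intro k
      induction k with
      | zero =>
        intro s h0 _ hk
        simp only [Nat.cast_zero, zero_mul] at hk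
        have : s = 0 := le_antisymm hk h0
        subst this
        simp
      | succ k ih =>
        intro s h0 hsR hk
        push_cast at hk
        by_cases hks : s ≤ (k:ℝ) * (π/2)
        · exact ih s h0 hsR hks
        push_neg at hks
        by_cases hsπ : s < π
        · -- single segment through the origin suffices
          have hval0 : ∀ t ∈ Set.Ioo (-π) π, (0:ℝ) • v + t • v ∈ Icube n := by
            apply hval 0 le_rfl
            have := mul_le_mul_of_nonneg_left hMR (le_of_lt hπ)
            linarith
          obtain ⟨a, b, hab⟩ := h ((0:ℝ) • v) v hv hval0
          have key0 : ∀ q : ℝ, |q| < π → f (q • v) = a * q + b := by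
            intro q hq
            have h1 := hab q (Set.mem_Ioo.2 (abs_lt.1 hq))
            have h2 : (0:ℝ) • v + q • v = q • v := by module
            rwa [h2] at h1
          set ρ0 : ℝ := ρ / (2*n) with hρ0def
          have hρ0 : 0 < ρ0 := by positivity
          have hρ0π : ρ0 < π := by
            rw [hρ0def]
            calc ρ / (2*n) ≤ ρ := by
                  rw [div_le_iff₀ (by positivity)]
                  nlinarith [hρ]
              _ ≤ π/8 := hρ8
              _ < π := by linarith
          have e1 : b = f 0 := by
            have h1 := key0 0 (by simpa using hπ)
            simp only [zero_smul, mul_zero, zero_add] at h1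
            exact h1.symm
          have e2 : a = C := by
            have h1 := key0 ρ0 (by rw [abs_of_pos hρ0]; exact hρ0π)
            have h2 := base ρ0 (le_of_lt hρ0) le_rfl
            rw [h1, e1] at h2
            have h3 : a * ρ0 = C * ρ0 := by linarith
            exact mul_right_cancel₀ (ne_of_gt hρ0) h3
          rw [key0 s (by rw [abs_of_nonneg h0]; exact hsπ), e1, e2]
          ring
        · -- shifted segment
          push_neg at hsπ
          have hk1 : (1:ℝ) ≤ (k:ℝ) := by
            by_contra hc
            push_neg at hc
            have : (k:ℝ) = 0 := by
              have : k = 0 := by exact_mod_cast Nat.lt_one_iff.1 (by exact_mod_cast hc)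
              exact_mod_cast this
            rw [this] at hk
            linarith
          have hMs : M < R := lt_of_lt_of_le hMπ (le_trans hsπ hsR)
          set σs : ℝ := π * R / M - π with hσsdef
          have hσs0 : 0 < σs := by
            rw [hσsdef, sub_pos, lt_div_iff₀ hM0]
            nlinarith
          set σ : ℝ := min (s - π/2) σs with hσdef
          have hσ0 : 0 < σ := by
            rw [hσdef]
            apply lt_min
            · linarith
            · exact hσs0
          have hσs' : σ ≤ σs := min_le_right _ _
          have hσle : σ ≤ s - π/2 := min_le_left _ _
          have hσk : σ ≤ (k:ℝ) * (π/2) := by linarith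
          have hσR : σ ≤ R := by linarith
          have hσval : (σ + π) * M ≤ π * R := by
            have h1 : σ + π ≤ π * R / M := by
              rw [hσsdef] at hσs'
              linarith
            calc (σ + π) * M ≤ (π * R / M) * M := mul_le_mul_of_nonneg_right h1 (le_of_lt hM0)
              _ = π * R := by field_simp
          obtain ⟨a, b, hab⟩ := h (σ • v) v hv (hval σ (le_of_lt hσ0) hσval)
          have key : ∀ q : ℝ, |q - σ| < π → f (q • v) = a * (q - σ) + b := by
            intro q hq
            have h1 := hab (q - σ) (Set.mem_Ioo.2 (abs_lt.1 hq))
            have h2 : σ • v + (q - σ) • v = q • v := by module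
            rwa [h2] at h1
          have hwin_s : |s - σ| < π := by
            rw [abs_of_nonneg (by linarith)]
            rcases le_total (s - π/2) σs with hc | hc
            · have : σ = s - π/2 := min_eq_left hc
              rw [this]; linarith
            · have hσeq : σ = σs := min_eq_right hc
              rw [hσeq, hσsdef]
              have h1 : R * M < π * R := by nlinarith
              have h2 : R < π * R / M := by
                rw [lt_div_iff₀ hM0]
                nlinarith
              linarith
          obtain ⟨q1, q2, hq1n, hq1R, hq1k, hq2n, hq2R, hq2k, hqne, hq1w, hq2w⟩ :
              ∃ q1 q2 : ℝ, 0 ≤ q1 ∧ q1 ≤ R ∧ q1 ≤ (k:ℝ) * (π/2) ∧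
                0 ≤ q2 ∧ q2 ≤ R ∧ q2 ≤ (k:ℝ) * (π/2) ∧ q1 ≠ q2 ∧
                |q1 - σ| < π ∧ |q2 - σ| < π := by
            by_cases hhalf : π/2 ≤ σ
            · refine ⟨σ - π/2, σ, by linarith, by linarith, by linarith,
                le_of_lt hσ0, hσR, hσk, by intro hcc; linarith [hπ], ?_, ?_⟩
              · rw [show σ - π/2 - σ = -(π/2) by ring, abs_neg, abs_of_pos (by linarith)]
                linarith
              · simp [hπ]
            · push_neg at hhalf
              refine ⟨0, σ, le_rfl, le_of_lt hR, by positivity,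
                le_of_lt hσ0, hσR, hσk, by intro hcc; linarith, ?_, ?_⟩
              · rw [show (0:ℝ) - σ = -σ by ring, abs_neg, abs_of_pos hσ0]
                linarith
              · simp [hπ]
          have e1 := key q1 hq1w
          rw [ih q1 hq1n hq1R hq1k] at e1
          have e2 := key q2 hq2w
          rw [ih q2 hq2n hq2R hq2k] at e2
          have ha : a = C := by
            have h3 : a * (q1 - q2) = C * (q1 - q2) := by linear_combination e2 - e1
            exact mul_right_cancel₀ (sub_ne_zero.2 hqne) h3
          rw [ha] at e1
          have hb : b = f 0 + C * σ := by linear_combination -e1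
          rw [key s hwin_s, ha, hb]
          ring
    -- conclude
    have hxRv : R • v = x := by
      rw [hvdef, smul_smul, mul_inv_cancel₀ (ne_of_gt hR), one_smul]
    set k : ℕ := ⌈R / (π/2)⌉₊ with hkdef
    have hkR : R ≤ (k:ℝ) * (π/2) := by
      have h1 : R / (π/2) ≤ (k:ℝ) := Nat.le_ceil _
      rw [div_le_iff₀ (by positivity)] at h1
      exact h1
    have hfin := ind k R (norm_nonneg x) le_rfl hkR
    rw [hxRv] at hfin
    rw [hfin, hinner x]
    congr 1
    rw [hCdef, Finset.mul_sum]
    apply Finset.sum_congr rfl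
    intro i _
    rw [hvi i]
    field_simp
end

section
/- Let d ≥ 1, m ≥ 1, let Ω ⊆ ℝ^d be open and let f : Ω → ℝ^m be differentiable at every point of Ω. For x ∈ Ω let T_x := {(v, Df(x)v) : v ∈ ℝ^d} ⊆ ℝ^d × ℝ^m be the tangent space of the graph of f at (x, f(x)) and N_x := T_x^⊥ its orthogonal complement (the normal space). Then for every x₀ ∈ Ω there exists ε > 0 such that the open ball in ℝ^d × ℝ^m of radius ε centred at (x₀, f(x₀)) is contained in the union of affine normal spaces ⋃_{x ∈ Ω} ((x, f(x)) + N_x). In particular this union of normal spaces contains an open neighborhood of the graph of f, and has nonempty interior. -/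
/-!
For `p` close to the graph point `(x₀, f x₀)`, minimise the distance from `p` to the graph
over a closed ball around `x₀`. Projecting to the first factor does not increase distances,
so the minimiser `z` lies at distance at most `2 ‖p - (x₀, f x₀)‖` from `x₀`, hence in the open
ball. There it is an interior minimum of `x ↦ ‖p - (x, f x)‖²`, and the vanishing of the
derivative says exactly that `p - (z, f z)` is orthogonal to the tangent space at `z`.
-/

open Metric WithLp

theorem exists_mem_ball_isMinOn_dist_of_dist_le_dist {X Y : Type*} [PseudoMetricSpace X]
    [ProperSpace X] [PseudoMetricSpace Y] {F : X → Y} {x₀ : X} {r : ℝ}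
    (hF : ContinuousOn F (closedBall x₀ r))
    (hFx₀ : ∀ x ∈ closedBall x₀ r, dist x x₀ ≤ dist (F x) (F x₀))
    {p : Y} (hp : dist p (F x₀) < r / 2) :
    ∃ z ∈ ball x₀ r, IsMinOn (fun x => dist p (F x)) (closedBall x₀ r) z := by
  have hx₀ : x₀ ∈ closedBall x₀ r :=
    mem_closedBall_self (by linarith [dist_nonneg (x := p) (y := F x₀)])
  obtain ⟨z, hz, hmin⟩ := (isCompact_closedBall x₀ r).exists_isMinOn ⟨x₀, hx₀⟩
    ((continuous_const.dist continuous_id).comp_continuousOn hF)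
  refine ⟨z, ?_, hmin⟩
  have hpz : dist p (F z) ≤ dist p (F x₀) := hmin hx₀
  calc dist z x₀ ≤ dist (F z) (F x₀) := hFx₀ z hz
    _ ≤ dist p (F z) + dist p (F x₀) := dist_triangle_left _ _ _
    _ < r := by linarith

theorem IsLocalMin.sub_mem_orthogonal_range {E W : Type*} [NormedAddCommGroup E]
    [NormedSpace ℝ E] [NormedAddCommGroup W] [InnerProductSpace ℝ W] {F : E → W}
    {L : E →L[ℝ] W} {p : W} {z : E} (hmin : IsLocalMin (fun x => dist p (F x)) z)
    (hF : HasFDerivAt F L z) : p - F z ∈ (LinearMap.range (L : E →ₗ[ℝ] W))ᗮ := by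
  have hsq : IsLocalMin (fun x => ‖p - F x‖ ^ 2) z := by
    filter_upwards [hmin] with x hx
    simpa only [← dist_eq_norm] using pow_le_pow_left₀ dist_nonneg hx 2
  have hderiv := hsq.hasFDerivAt_eq_zero (hF.const_sub p).norm_sq
  rw [Submodule.mem_orthogonal']
  rintro _ ⟨v, rfl⟩
  have hv := DFunLike.congr_fun hderiv v
  simp only [ContinuousLinearMap.comp_neg, smul_apply, neg_apply,
    ContinuousLinearMap.comp_apply, innerSL_apply_apply, zero_apply, smul_neg, neg_eq_zero,
    smul_eq_zero] at hv
  exact hv.resolve_left two_ne_zero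

theorem HasFDerivAt.toLp_prodMk {𝕜 E F G : Type*} [NontriviallyNormedField 𝕜]
    [NormedAddCommGroup E] [NormedSpace 𝕜 E] [NormedAddCommGroup F] [NormedSpace 𝕜 F]
    [NormedAddCommGroup G] [NormedSpace 𝕜 G] (q : ENNReal) [Fact (1 ≤ q)]
    {f : E → F} {g : E → G} {f' : E →L[𝕜] F} {g' : E →L[𝕜] G} {x : E}
    (hf : HasFDerivAt f f' x) (hg : HasFDerivAt g g' x) :
    HasFDerivAt (fun y => toLp q (f y, g y))
      ((prodContinuousLinearEquiv q 𝕜 F G).symm.toContinuousLinearMap ∘L f'.prod g') x :=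
  (prodContinuousLinearEquiv q 𝕜 F G).symm.hasFDerivAt.comp x (hf.prodMk hg)

theorem stmt_4_general (d m : ℕ)
    (Ω : Set (EuclideanSpace ℝ (Fin d))) (hΩ : IsOpen Ω)
    (f : EuclideanSpace ℝ (Fin d) → EuclideanSpace ℝ (Fin m))
    (Df : EuclideanSpace ℝ (Fin d) →
      (EuclideanSpace ℝ (Fin d) →L[ℝ] EuclideanSpace ℝ (Fin m)))
    (hf : ∀ x ∈ Ω, HasFDerivAt f (Df x) x)
    (x₀ : EuclideanSpace ℝ (Fin d)) (hx₀ : x₀ ∈ Ω) :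
    ∃ ε > 0, Metric.ball
        ((WithLp.equiv 2 (EuclideanSpace ℝ (Fin d) × EuclideanSpace ℝ (Fin m))).symm
          (x₀, f x₀)) ε ⊆
      {p : WithLp 2 (EuclideanSpace ℝ (Fin d) × EuclideanSpace ℝ (Fin m)) |
        ∃ x ∈ Ω, ∃ w ∈ (Submodule.span ℝ
            {q : WithLp 2 (EuclideanSpace ℝ (Fin d) × EuclideanSpace ℝ (Fin m)) |
              ∃ v : EuclideanSpace ℝ (Fin d),
                q = (WithLp.equiv 2 _).symm (v, Df x v)})ᗮ,
          p = (WithLp.equiv 2 _).symm (x, f x) + w} := by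
  obtain ⟨r, hr, hrΩ⟩ := nhds_basis_closedBall.mem_iff.1 (hΩ.mem_nhds hx₀)
  have hF (x) (hx : x ∈ Ω) := (hasFDerivAt_id x).toLp_prodMk 2 (hf x hx)
  -- `HasFDerivAt.continuousAt` would trigger a very slow `ContinuousSMul` search on `WithLp`.
  have hFc : ContinuousOn (fun x => toLp 2 (x, f x)) (closedBall x₀ r) := fun x hx =>
    ((prod_continuous_toLp 2 _ _).continuousAt.comp
      (continuousAt_id.prodMk (hf x (hrΩ hx)).continuousAt)).continuousWithinAt
  refine ⟨r / 2, half_pos hr, fun p hp => ?_⟩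
  obtain ⟨z, hz, hmin⟩ := exists_mem_ball_isMinOn_dist_of_dist_le_dist hFc
    (fun x _ => dist_fst_le (toLp 2 (x, f x)) (toLp 2 (x₀, f x₀))) hp
  have hzΩ : z ∈ Ω := hrΩ (ball_subset_closedBall hz)
  have hnormal := (hmin.isLocalMin (closedBall_mem_nhds_of_mem hz)).sub_mem_orthogonal_range
    (hF z hzΩ)
  refine ⟨z, hzΩ, p - toLp 2 (z, f z), ?_, (add_sub_cancel _ _).symm⟩
  convert hnormal using 2
  rw [← Submodule.span_eq (LinearMap.range _), LinearMap.coe_range]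
  exact congrArg _ (Set.ext fun q => exists_congr fun v => eq_comm)

/-- the union of the affine normal spaces of the graph of a differentiable
map contains an open ball around each point of the graph. Here the graph lives in the
Euclidean product `WithLp 2 (ℝ^d × ℝ^m)`, tangent spaces are the graphs of the
derivatives, and normal spaces are their orthogonal complements. -/
theorem stmt_4 (d m : ℕ) (hd : 1 ≤ d) (hm : 1 ≤ m)
    (Ω : Set (EuclideanSpace ℝ (Fin d))) (hΩ : IsOpen Ω)
    (f : EuclideanSpace ℝ (Fin d) → EuclideanSpace ℝ (Fin m))
    (Df : EuclideanSpace ℝ (Fin d) →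
      (EuclideanSpace ℝ (Fin d) →L[ℝ] EuclideanSpace ℝ (Fin m)))
    (hf : ∀ x ∈ Ω, HasFDerivAt f (Df x) x)
    (x₀ : EuclideanSpace ℝ (Fin d)) (hx₀ : x₀ ∈ Ω) :
    ∃ ε > 0, Metric.ball
        ((WithLp.equiv 2 (EuclideanSpace ℝ (Fin d) × EuclideanSpace ℝ (Fin m))).symm
          (x₀, f x₀)) ε ⊆
      {p : WithLp 2 (EuclideanSpace ℝ (Fin d) × EuclideanSpace ℝ (Fin m)) |
        ∃ x ∈ Ω, ∃ w ∈ (Submodule.span ℝ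
            {q : WithLp 2 (EuclideanSpace ℝ (Fin d) × EuclideanSpace ℝ (Fin m)) |
              ∃ v : EuclideanSpace ℝ (Fin d),
                q = (WithLp.equiv 2 _).symm (v, Df x v)})ᗮ,
          p = (WithLp.equiv 2 _).symm (x, f x) + w} :=
  stmt_4_general d m Ω hΩ f Df hf x₀ hx₀
end

section
/- Let d ≥ 1, m ≥ 1, let Ω ⊆ ℝ^d be open and let f : Ω → ℝ^m be differentiable on Ω such that the derivative map x ↦ Df(x) is locally Lipschitz on Ω. Then the union of the affine tangent spaces of the graph of f satisfies dim_H Δ_*TΓ_f ≤ 2d, where dim_H denotes Hausdorff dimension. -/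
open Set Metric Module
open scoped ENNReal NNReal

/-- if f : Ω ⊆ ℝ^d → ℝ^m is differentiable with locally Lipschitz derivative
map, then the union of the affine tangent spaces of its graph has Hausdorff dimension
at most 2d. -/
theorem stmt_5 (d m : ℕ) (hd : 1 ≤ d) (hm : 1 ≤ m)
    (Ω : Set (EuclideanSpace ℝ (Fin d))) (hΩ : IsOpen Ω)
    (f : EuclideanSpace ℝ (Fin d) → EuclideanSpace ℝ (Fin m))
    (Df : EuclideanSpace ℝ (Fin d) →
      (EuclideanSpace ℝ (Fin d) →L[ℝ] EuclideanSpace ℝ (Fin m)))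
    (hf : ∀ x ∈ Ω, HasFDerivAt f (Df x) x)
    (hlip : ∀ x ∈ Ω, ∃ (K : NNReal) (s : Set (EuclideanSpace ℝ (Fin d))),
      s ∈ nhds x ∧ s ⊆ Ω ∧ LipschitzOnWith K Df s) :
    dimH {p : EuclideanSpace ℝ (Fin d) × EuclideanSpace ℝ (Fin m) |
        ∃ x ∈ Ω, ∃ a : EuclideanSpace ℝ (Fin d), p = (a, f x + Df x (a - x))} ≤
      (2 * d : ℕ) := by
  set g : EuclideanSpace ℝ (Fin d) × EuclideanSpace ℝ (Fin d) → EuclideanSpace ℝ (Fin d) × EuclideanSpace ℝ (Fin m) := fun p => (p.2, f p.1 + Df p.1 (p.2 - p.1)) with hg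
  have hset : {p : EuclideanSpace ℝ (Fin d) × EuclideanSpace ℝ (Fin m) | ∃ x ∈ Ω, ∃ a : EuclideanSpace ℝ (Fin d), p = (a, f x + Df x (a - x))}
      = g '' (Ω ×ˢ (univ : Set (EuclideanSpace ℝ (Fin d)))) := by
    ext p
    constructor
    · rintro ⟨x, hx, a, rfl⟩
      exact ⟨(x, a), ⟨hx, trivial⟩, rfl⟩
    · rintro ⟨⟨x, a⟩, ⟨hx, -⟩, rfl⟩
      exact ⟨x, hx, a, rfl⟩
  rw [hset]
  have hloc : ∀ p ∈ Ω ×ˢ (univ : Set (EuclideanSpace ℝ (Fin d))), ∃ C : NNReal,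
      ∃ t ∈ nhdsWithin p (Ω ×ˢ (univ : Set (EuclideanSpace ℝ (Fin d)))), LipschitzOnWith C g t := by
    rintro ⟨x₀, a₀⟩ ⟨hx₀, -⟩
    obtain ⟨K, s, hs_nhds, hsΩ, hK⟩ := hlip x₀ hx₀
    obtain ⟨r, hr0, hBs⟩ := Metric.nhds_basis_closedBall.mem_iff.1 hs_nhds
    set B := Metric.closedBall x₀ r with hB
    have hx₀B : x₀ ∈ B := Metric.mem_closedBall_self hr0.le
    set M : ℝ := ‖Df x₀‖ + K * r with hM
    have hM0 : 0 ≤ M := add_nonneg (norm_nonneg _)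
      (mul_nonneg K.coe_nonneg hr0.le)
    have hMx : ∀ x ∈ B, ‖Df x‖ ≤ M := by
      intro x hx
      have h1 : dist (Df x) (Df x₀) ≤ K * dist x x₀ :=
        hK.dist_le_mul x (hBs hx) x₀ (hBs hx₀B)
      have h2 : dist x x₀ ≤ r := Metric.mem_closedBall.1 hx
      calc ‖Df x‖ ≤ ‖Df x₀‖ + dist (Df x) (Df x₀) := by
            rw [dist_eq_norm]
            have := norm_sub_norm_le (Df x) (Df x₀)
            linarith
        _ ≤ ‖Df x₀‖ + K * r := by
            have : (K : ℝ) * dist x x₀ ≤ K * r :=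
              mul_le_mul_of_nonneg_left h2 K.coe_nonneg
            linarith
        _ = M := rfl
    have hfl : ∀ x ∈ B, ∀ y ∈ B, ‖f x - f y‖ ≤ M * ‖x - y‖ := by
      intro x hx y hy
      exact (convex_closedBall x₀ r).norm_image_sub_le_of_norm_hasFDerivWithin_le
        (fun z hz => (hf z (hsΩ (hBs hz))).hasFDerivWithinAt) hMx hy hx
    set R : ℝ := 1 + dist a₀ x₀ + r with hR
    have hR0 : 0 ≤ R := by positivity
    set L : ℝ := 3 * M + K * R with hL
    refine ⟨L.toNNReal ⊔ 1, B ×ˢ Metric.closedBall a₀ 1, ?_, ?_⟩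
    · exact mem_nhdsWithin_of_mem_nhds (prod_mem_nhds
        (Metric.closedBall_mem_nhds _ hr0) (Metric.closedBall_mem_nhds _ one_pos))
    · rw [lipschitzOnWith_iff_dist_le_mul]
      rintro ⟨x, a⟩ ⟨hxB, haA⟩ ⟨y, b⟩ ⟨hyB, hbA⟩
      set D : ℝ := dist ((x, a) : EuclideanSpace ℝ (Fin d) × EuclideanSpace ℝ (Fin d)) ((y, b) : EuclideanSpace ℝ (Fin d) × EuclideanSpace ℝ (Fin d)) with hD
      have hxy : dist x y ≤ D := by
        rw [hD, Prod.dist_eq]; exact le_max_left _ _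
      have hab : dist a b ≤ D := by
        rw [hD, Prod.dist_eq]; exact le_max_right _ _
      have hD0 : 0 ≤ D := dist_nonneg
      have hax : ‖a - x‖ ≤ R := by
        have h4 : dist a x ≤ dist a a₀ + dist a₀ x₀ + dist x₀ x := dist_triangle4 a a₀ x₀ x
        have h5 : dist a a₀ ≤ 1 := Metric.mem_closedBall.1 haA
        have h6 : dist x₀ x ≤ r := by
          rw [dist_comm]; exact Metric.mem_closedBall.1 hxB
        rw [← dist_eq_norm]
        rw [hR]; linarith
      have hC1 : (1 : ℝ) ≤ ((L.toNNReal ⊔ 1 : NNReal) : ℝ) := by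
        exact_mod_cast le_sup_right (a := L.toNNReal) (b := (1 : NNReal))
      have hCL : L ≤ ((L.toNNReal ⊔ 1 : NNReal) : ℝ) := by
        refine le_trans (Real.le_coe_toNNReal L) ?_
        exact_mod_cast le_sup_left (a := L.toNNReal) (b := (1 : NNReal))
      have key : dist (f x + Df x (a - x)) (f y + Df y (b - y)) ≤ L * D := by
        rw [dist_eq_norm]
        have e1 : (f x + Df x (a - x)) - (f y + Df y (b - y))
            = (f x - f y) + ((Df x - Df y) (a - x) + Df y ((a - x) - (b - y))) := by
          simp only [ContinuousLinearMap.sub_apply, map_sub]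
          abel
        rw [e1]
        have b1 : ‖f x - f y‖ ≤ M * D := by
          refine le_trans (hfl x hxB y hyB) ?_
          have : ‖x - y‖ ≤ D := by rw [← dist_eq_norm]; exact hxy
          nlinarith
        have b2 : ‖(Df x - Df y) (a - x)‖ ≤ K * D * R := by
          calc ‖(Df x - Df y) (a - x)‖ ≤ ‖Df x - Df y‖ * ‖a - x‖ :=
                (Df x - Df y).le_opNorm _
            _ ≤ (K * D) * R := by
                have h7 : ‖Df x - Df y‖ ≤ K * dist x y := by
                  rw [← dist_eq_norm]
                  exact hK.dist_le_mul x (hBs hxB) y (hBs hyB)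
                have h8 : ‖Df x - Df y‖ ≤ K * D :=
                  le_trans h7 (mul_le_mul_of_nonneg_left hxy K.coe_nonneg)
                exact mul_le_mul h8 hax (norm_nonneg _) (by positivity)
            _ = K * D * R := rfl
        have b3 : ‖Df y ((a - x) - (b - y))‖ ≤ M * (2 * D) := by
          calc ‖Df y ((a - x) - (b - y))‖ ≤ ‖Df y‖ * ‖(a - x) - (b - y)‖ :=
                (Df y).le_opNorm _
            _ ≤ M * (2 * D) := by
                have h9 : ‖(a - x) - (b - y)‖ ≤ ‖a - b‖ + ‖y - x‖ := by
                  have e2 : (a - x) - (b - y) = (a - b) + (y - x) := by abel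
                  rw [e2]; exact norm_add_le _ _
                have h10 : ‖a - b‖ ≤ D := by rw [← dist_eq_norm]; exact hab
                have h11 : ‖y - x‖ ≤ D := by
                  rw [← dist_eq_norm, dist_comm]; exact hxy
                have h12 : ‖(a - x) - (b - y)‖ ≤ 2 * D := by linarith
                exact mul_le_mul (hMx y hyB) h12 (norm_nonneg _) hM0
        calc ‖(f x - f y) + ((Df x - Df y) (a - x) + Df y ((a - x) - (b - y)))‖
            ≤ ‖f x - f y‖ + (‖(Df x - Df y) (a - x)‖ + ‖Df y ((a - x) - (b - y))‖) :=
              le_trans (norm_add_le _ _) (by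
                have := norm_add_le ((Df x - Df y) (a - x)) (Df y ((a - x) - (b - y)))
                linarith)
          _ ≤ M * D + (K * D * R + M * (2 * D)) := by linarith
          _ = L * D := by rw [hL]; ring
      rw [hg]
      simp only [Prod.dist_eq]
      refine max_le ?_ ?_
      · calc dist a b ≤ 1 * D := by linarith
          _ ≤ ((L.toNNReal ⊔ 1 : NNReal) : ℝ) * D :=
            mul_le_mul_of_nonneg_right hC1 hD0
      · calc dist (f x + Df x (a - x)) (f y + Df y (b - y)) ≤ L * D := key
          _ ≤ ((L.toNNReal ⊔ 1 : NNReal) : ℝ) * D :=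
            mul_le_mul_of_nonneg_right hCL hD0
  calc dimH (g '' (Ω ×ˢ (univ : Set (EuclideanSpace ℝ (Fin d)))))
      ≤ dimH (Ω ×ˢ (univ : Set (EuclideanSpace ℝ (Fin d)))) := dimH_image_le_of_locally_lipschitzOn hloc
    _ ≤ dimH (univ : Set (EuclideanSpace ℝ (Fin d) × EuclideanSpace ℝ (Fin d))) := dimH_mono (subset_univ _)
    _ = (finrank ℝ (EuclideanSpace ℝ (Fin d) × EuclideanSpace ℝ (Fin d)) : ℝ≥0∞) := Real.dimH_univ_eq_finrank _
    _ = ((2 * d : ℕ) : ℝ≥0∞) := by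
        rw [finrank_prod]
        simp [finrank_euclideanSpace_fin, two_mul]
end

section
/- Let n ≥ 1 and let f : I^n → ℝ be differentiable at every point of I^n. Then for every a ∈ I^n the image of the section transform of f at a, namely the set {f(x) + Df(x)(a − x) : x ∈ I^n} ⊆ ℝ, is connected (an interval). -/
open Real

/-!
Restricted to the segment from `a` to `x`, the section transform at `a` becomes
`ψ(t) = h(t) - t h'(t)` with `h(t) = f(a + t(x - a))`, and all these segments meet at `a`,
where it takes the value `f(a)`. So it suffices that `ψ` has the intermediate value property on
`[0, 1]`. For `t > 0` the sign of `z - ψ(t)` is that of the derivative of `(h(t) - z) / t`, and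
Darboux's theorem for that derivative gives intermediate values between two positive times. If
`h(0) < z < ψ(u)`, then `(h(t) - z) / t → -∞` as `t → 0⁺`, so by the mean value theorem its
derivative is positive somewhere in `(0, u)`, i.e. `ψ < z` there, which is the first case.
-/

open Set Filter Topology

def tangentIntercept (h h' : ℝ → ℝ) (t : ℝ) : ℝ := h t - t * h' t

@[simp]
lemma tangentIntercept_zero (h h' : ℝ → ℝ) : tangentIntercept h h' 0 = h 0 := by
  simp [tangentIntercept]

lemma tangentIntercept_neg (h h' : ℝ → ℝ) :
    tangentIntercept (-h) (-h') = -tangentIntercept h h' := by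
  ext t
  simp only [tangentIntercept, Pi.neg_apply]
  ring

lemma hasDerivAt_sub_div_self {h h' : ℝ → ℝ} {t : ℝ} (z : ℝ) (hd : HasDerivAt h (h' t) t)
    (ht : t ≠ 0) :
    HasDerivAt (fun s => (h s - z) / s) ((z - tangentIntercept h h' t) / t ^ 2) t := by
  have hquot : (z - tangentIntercept h h' t) / t ^ 2 = (h' t * t - (h t - z) * 1) / t ^ 2 := by
    rw [tangentIntercept]
    ring
  exact hquot ▸ (hd.sub_const z).div (hasDerivAt_id' t) ht

lemma exists_tangentIntercept_eq_of_pos {h h' : ℝ → ℝ} {s u z : ℝ} (hs : 0 < s) (hu : 0 < u)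
    (hd : ∀ t ∈ uIcc s u, HasDerivAt h (h' t) t)
    (hsz : tangentIntercept h h' s < z) (hzu : z < tangentIntercept h h' u) :
    ∃ t ∈ uIcc s u, tangentIntercept h h' t = z := by
  set G' : ℝ → ℝ := fun t => (z - tangentIntercept h h' t) / t ^ 2
  have hpos : ∀ t ∈ uIcc s u, 0 < t := fun t ht => lt_of_lt_of_le (lt_min hs hu) ht.1
  have hG : (G' '' uIcc s u).OrdConnected :=
    ordConnected_uIcc.image_hasDerivWithinAt fun t ht =>
      (hasDerivAt_sub_div_self z (hd t ht) (hpos t ht).ne').hasDerivWithinAt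
  have hGu : G' u < 0 := div_neg_of_neg_of_pos (by linarith) (by positivity)
  have hGs : 0 < G' s := div_pos (by linarith) (by positivity)
  obtain ⟨t, ht, hGt⟩ := hG.out ⟨u, right_mem_uIcc, rfl⟩ ⟨s, left_mem_uIcc, rfl⟩
    ⟨hGu.le, hGs.le⟩
  have : z - tangentIntercept h h' t = 0 :=
    (div_eq_zero_iff.mp hGt).resolve_right (pow_ne_zero 2 (hpos t ht).ne')
  exact ⟨t, ht, by linarith⟩

lemma exists_tangentIntercept_eq_of_lt_of_zero_lt {h h' : ℝ → ℝ} {u z : ℝ} (hu : 0 < u)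
    (hd : ∀ t ∈ Icc 0 u, HasDerivAt h (h' t) t)
    (h0z : h 0 < z) (hzu : z < tangentIntercept h h' u) :
    ∃ t ∈ Icc 0 u, tangentIntercept h h' t = z := by
  set G : ℝ → ℝ := fun t => (h t - z) / t
  set G' : ℝ → ℝ := fun t => (z - tangentIntercept h h' t) / t ^ 2
  have hG_atBot : Tendsto G (𝓝[>] 0) atBot := by
    have hcont : Tendsto (fun t => h t - z) (𝓝[>] 0) (𝓝 (h 0 - z)) :=
      ((hd 0 ⟨le_rfl, hu.le⟩).continuousAt.tendsto.sub_const z).mono_left nhdsWithin_le_nhds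
    simpa only [G, div_eq_mul_inv] using
      hcont.neg_mul_atTop (sub_neg.mpr h0z) tendsto_inv_nhdsGT_zero
  obtain ⟨s, hGs, hs⟩ :=
    ((hG_atBot.eventually_lt_atBot (G u)).and (Ioo_mem_nhdsGT hu)).exists
  have hderiv : ∀ t ∈ Icc s u, HasDerivAt G (G' t) t := fun t ht =>
    hasDerivAt_sub_div_self z (hd t ⟨hs.1.le.trans ht.1, ht.2⟩) (hs.1.trans_le ht.1).ne'
  obtain ⟨c, hc, hG'c⟩ := exists_hasDerivAt_eq_slope G G' hs.2
    (fun t ht => (hderiv t ht).continuousAt.continuousWithinAt)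
    (fun t ht => hderiv t (Ioo_subset_Icc_self ht))
  have hc0 : 0 < c := hs.1.trans hc.1
  have hcz : tangentIntercept h h' c < z := by
    have : 0 < G' c := hG'c ▸ div_pos (by linarith) (by linarith [hc.2])
    have := (div_pos_iff_of_pos_right (by positivity : (0 : ℝ) < c ^ 2)).mp this
    linarith
  have hsub : uIcc c u ⊆ Icc 0 u := uIcc_subset_Icc ⟨hc0.le, hc.2.le⟩ ⟨hu.le, le_rfl⟩
  obtain ⟨t, ht, rfl⟩ :=
    exists_tangentIntercept_eq_of_pos hc0 hu (fun t ht => hd t (hsub ht)) hcz hzu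
  exact ⟨t, hsub ht, rfl⟩

lemma exists_tangentIntercept_eq_of_lt_of_lt_zero {h h' : ℝ → ℝ} {u z : ℝ} (hu : 0 < u)
    (hd : ∀ t ∈ Icc 0 u, HasDerivAt h (h' t) t)
    (huz : tangentIntercept h h' u < z) (hz0 : z < h 0) :
    ∃ t ∈ Icc 0 u, tangentIntercept h h' t = z := by
  obtain ⟨t, ht, hzt⟩ := exists_tangentIntercept_eq_of_lt_of_zero_lt (h := -h) (h' := -h')
    (z := -z) hu (fun t ht => (hd t ht).neg) (neg_lt_neg hz0)
    (by simpa [tangentIntercept_neg] using huz)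
  exact ⟨t, ht, by simpa [tangentIntercept_neg] using hzt⟩

theorem ordConnected_image_tangentIntercept {h h' : ℝ → ℝ} {b : ℝ}
    (hd : ∀ t ∈ Icc 0 b, HasDerivAt h (h' t) t) :
    (tangentIntercept h h' '' Icc 0 b).OrdConnected := by
  refine ordConnected_of_Ioo ?_
  rintro _ ⟨s, hs, rfl⟩ _ ⟨u, hu, rfl⟩ - z ⟨hsz, hzu⟩
  have hsub {v : ℝ} (hv : v ∈ Icc 0 b) : Icc 0 v ⊆ Icc 0 b := Icc_subset_Icc_right hv.2
  rcases hs.1.eq_or_lt with rfl | hs0 <;> rcases hu.1.eq_or_lt with rfl | hu0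
  · exact absurd (hsz.trans hzu) (lt_irrefl _)
  · obtain ⟨t, ht, rfl⟩ := exists_tangentIntercept_eq_of_lt_of_zero_lt hu0
      (fun t ht => hd t (hsub hu ht)) (by simpa using hsz) hzu
    exact ⟨t, hsub hu ht, rfl⟩
  · obtain ⟨t, ht, rfl⟩ := exists_tangentIntercept_eq_of_lt_of_lt_zero hs0
      (fun t ht => hd t (hsub hs ht)) hsz (by simpa using hzu)
    exact ⟨t, hsub hs ht, rfl⟩
  · have hsub' : uIcc s u ⊆ Icc 0 b := uIcc_subset_Icc hs hu
    obtain ⟨t, ht, rfl⟩ :=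
      exists_tangentIntercept_eq_of_pos hs0 hu0 (fun t ht => hd t (hsub' ht)) hsz hzu
    exact ⟨t, hsub' ht, rfl⟩

section SectionTransform

variable {E : Type*} [NormedAddCommGroup E] [NormedSpace ℝ E]
  {f : E → ℝ} {Df : E → E →L[ℝ] ℝ} {a : E}

theorem isPreconnected_image_segment_sectionTransform {x : E}
    (hf : ∀ y ∈ segment ℝ a x, HasFDerivAt f (Df y) y) :
    IsPreconnected ((fun y => f y + Df y (a - y)) '' segment ℝ a x) := by
  set p : ℝ → E := fun t => a + t • (x - a)
  have hp : ∀ t ∈ Icc (0 : ℝ) 1, p t ∈ segment ℝ a x := fun t ht =>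
    segment_eq_image' ℝ a x ▸ mem_image_of_mem p ht
  have hd : ∀ t ∈ Icc (0 : ℝ) 1, HasDerivAt (f ∘ p) (Df (p t) (x - a)) t := fun t ht =>
    (hf _ (hp t ht)).comp_hasDerivAt t (by
      simpa only [one_smul] using ((hasDerivAt_id' t).smul_const (x - a)).const_add a)
  have hφ : (fun y => f y + Df y (a - y)) ∘ p =
      tangentIntercept (f ∘ p) (fun t => Df (p t) (x - a)) := by
    ext t
    have : a - p t = -(t • (x - a)) := by simp only [p]; abel
    simp only [Function.comp, tangentIntercept, this, map_neg, map_smul, smul_eq_mul]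
    ring
  rw [segment_eq_image', ← image_comp, hφ]
  exact (ordConnected_image_tangentIntercept hd).isPreconnected

theorem StarConvex.isPreconnected_image_sectionTransform {s : Set E} (hs : StarConvex ℝ a s)
    (hf : ∀ x ∈ s, HasFDerivAt f (Df x) x) :
    IsPreconnected ((fun x => f x + Df x (a - x)) '' s) := by
  refine isPreconnected_of_forall (f a) ?_
  rintro _ ⟨x, hx, rfl⟩
  refine ⟨_, image_mono (hs.segment_subset hx), ⟨a, left_mem_segment ℝ a x, by simp⟩,
    mem_image_of_mem _ (right_mem_segment ℝ a x), ?_⟩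
  exact isPreconnected_image_segment_sectionTransform fun y hy => hf y (hs.segment_subset hx hy)

end SectionTransform

lemma convex_Icube (n : ℕ) : Convex ℝ (Icube n) := by
  intro x hx y hy s t hs ht hst i
  simpa only [PiLp.add_apply, PiLp.smul_apply, smul_eq_mul] using
    convex_Ioo (-π) π (hx i) (hy i) hs ht hst

theorem stmt_9_general (n : ℕ) (f : EuclideanSpace ℝ (Fin n) → ℝ)
    (Df : EuclideanSpace ℝ (Fin n) → (EuclideanSpace ℝ (Fin n) →L[ℝ] ℝ))
    (hf : ∀ x ∈ Icube n, HasFDerivAt f (Df x) x)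
    (a : EuclideanSpace ℝ (Fin n)) (ha : a ∈ Icube n) :
    IsConnected {y : ℝ | ∃ x ∈ Icube n, y = f x + Df x (a - x)} := by
  have himage : {y : ℝ | ∃ x ∈ Icube n, y = f x + Df x (a - x)} =
      (fun x => f x + Df x (a - x)) '' Icube n := by
    ext y
    simp only [mem_ofPred_eq, mem_image, eq_comm]
  rw [himage]
  exact ⟨⟨_, mem_image_of_mem _ ha⟩,
    ((convex_Icube n).starConvex ha).isPreconnected_image_sectionTransform hf⟩

/-- for f : I^n → ℝ differentiable everywhere on I^n, the image of the
section transform φ_f^a(x) = f(x) + Df(x)(a − x) is a connected subset of ℝ. -/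
theorem stmt_9 (n : ℕ) (hn : 1 ≤ n) (f : EuclideanSpace ℝ (Fin n) → ℝ)
    (Df : EuclideanSpace ℝ (Fin n) → (EuclideanSpace ℝ (Fin n) →L[ℝ] ℝ))
    (hf : ∀ x ∈ Icube n, HasFDerivAt f (Df x) x)
    (a : EuclideanSpace ℝ (Fin n)) (ha : a ∈ Icube n) :
    IsConnected {y : ℝ | ∃ x ∈ Icube n, y = f x + Df x (a - x)} :=
  stmt_9_general n f Df hf a ha
end

section
/- Let d ≥ 1, m ≥ 1, let Ω ⊆ ℝ^d be open, and let f : Ω → ℝ^m be continuously differentiable. Let v : Ω → ℝ^d × ℝ^m be a continuously differentiable nowhere-vanishing vector field along the graph of f, and suppose the line field it spans is not everywhere tangent to the graph: there exists x₀ ∈ Ω such that v(x₀) ∉ {(u, Df(x₀)u) : u ∈ ℝ^d}. Then the union of the corresponding affine lines, L := {(x, f(x)) + t·v(x) : x ∈ Ω, t ∈ ℝ} ⊆ ℝ^d × ℝ^m, satisfies ℋ^{d+1}(L) > 0, where ℋ^{d+1} is the (d+1)-dimensional Hausdorff measure. Moreover, if m = 1 (the graph is a hypersurface), then L has nonempty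 interior. -/
/-!
Sweep the lines by `Φ (x, t) = (x, f x) + t • v x`, a C¹ map from the `(d+1)`-dimensional
space `Ω × ℝ`. At `(x₀, 0)` its derivative is `(u, s) ↦ (u, Df(x₀) u) + s • v x₀`, which is
injective exactly because `v x₀` is not tangent to the graph. Composing `Φ` with a linear left
inverse of this derivative gives a map with derivative the identity, which by the inverse function
theorem covers a neighbourhood; since linear maps are Lipschitz, the image of `Φ` therefore has
positive `ℋ^{d+1}`-measure. When `m = 1` the derivative is a linear isomorphism and the inverse
function theorem applies to `Φ` itself.
-/

open MeasureTheory Set Filter Function Module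
open scoped NNReal ENNReal Topology

theorem LipschitzWith.hausdorffMeasure_pos_of_image {X Y : Type*}
    [EMetricSpace X] [MeasurableSpace X] [BorelSpace X]
    [EMetricSpace Y] [MeasurableSpace Y] [BorelSpace Y]
    {K : ℝ≥0} {g : X → Y} (hg : LipschitzWith K g) {d : ℝ} (hd : 0 ≤ d) {s : Set X}
    (hs : 0 < μH[d] (g '' s)) : 0 < μH[d] s := by
  refine pos_iff_ne_zero.2 fun h0 => hs.ne' (le_antisymm ?_ bot_le)
  simpa [h0] using hg.hausdorffMeasure_image_le hd s

section InverseFunction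

variable {E F : Type*} [NormedAddCommGroup E] [NormedSpace ℝ E] [FiniteDimensional ℝ E]
  [NormedAddCommGroup F] [NormedSpace ℝ F] [FiniteDimensional ℝ F]
  {Φ : E → F} {A : E →L[ℝ] F} {a : E} {U : Set E}

theorem HasStrictFDerivAt.image_mem_nhds_of_surjective (hΦ : HasStrictFDerivAt Φ A a)
    (hA : Surjective A) (hU : U ∈ 𝓝 a) : Φ '' U ∈ 𝓝 (Φ a) := by
  rw [← hΦ.map_nhds_eq_of_surj (LinearMap.range_eq_top.2 hA)]
  exact image_mem_map hU

theorem HasStrictFDerivAt.image_mem_nhds_of_injective_of_finrank_eq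
    (hΦ : HasStrictFDerivAt Φ A a) (hA : Injective A) (hEF : finrank ℝ E = finrank ℝ F)
    (hU : U ∈ 𝓝 a) : Φ '' U ∈ 𝓝 (Φ a) :=
  hΦ.image_mem_nhds_of_surjective
    ((LinearMap.injective_iff_surjective_of_finrank_eq_finrank hEF (f := A.toLinearMap)).1 hA) hU

theorem HasStrictFDerivAt.hausdorffMeasure_image_pos_of_injective
    [MeasurableSpace E] [BorelSpace E] [MeasurableSpace F] [BorelSpace F]
    (hΦ : HasStrictFDerivAt Φ A a) (hA : Injective A) (hU : U ∈ 𝓝 a) :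
    0 < μH[finrank ℝ E] (Φ '' U) := by
  obtain ⟨B, hBA⟩ := ContinuousLinearMap.HasLeftInverse.of_injective_of_finiteDimensional hA
  have hBΦ : HasStrictFDerivAt (B ∘ Φ) (B.comp A) a := B.hasStrictFDerivAt.comp a hΦ
  have hcover : B '' (Φ '' U) ∈ 𝓝 (B (Φ a)) := by
    rw [image_image]
    exact hBΦ.image_mem_nhds_of_surjective (fun z => ⟨z, hBA z⟩) hU
  exact B.lipschitz.hausdorffMeasure_pos_of_image (Nat.cast_nonneg _)
    (Measure.measure_pos_of_mem_nhds _ hcover)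

end InverseFunction

section LineSweep

variable {E F : Type*} [NormedAddCommGroup E] [NormedSpace ℝ E]
  [NormedAddCommGroup F] [NormedSpace ℝ F]

def lineSweep (f : E → F) (v : E → E × F) (p : E × ℝ) : E × F :=
  (p.1, f p.1) + p.2 • v p.1

def lineSweepFDeriv (L : E →L[ℝ] F) (w : E × F) : E × ℝ →L[ℝ] E × F :=
  (ContinuousLinearMap.fst ℝ E ℝ).prod (L.comp (ContinuousLinearMap.fst ℝ E ℝ)) +
    (ContinuousLinearMap.snd ℝ E ℝ).smulRight w

theorem lineSweepFDeriv_apply (L : E →L[ℝ] F) (w : E × F) (u : E) (s : ℝ) :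
    lineSweepFDeriv L w (u, s) = (u, L u) + s • w :=
  rfl

theorem hasStrictFDerivAt_lineSweep {f : E → F} {v : E → E × F} {L : E →L[ℝ] F}
    {v' : E →L[ℝ] E × F} {x : E} (hf : HasStrictFDerivAt f L x)
    (hv : HasStrictFDerivAt v v' x) :
    HasStrictFDerivAt (lineSweep f v) (lineSweepFDeriv L (v x)) (x, 0) := by
  have hfst := hasStrictFDerivAt_fst (𝕜 := ℝ) (p := (x, (0 : ℝ)))
  have h := (hfst.prodMk (hf.comp (x, 0) hfst)).add
    ((hasStrictFDerivAt_snd (p := (x, (0 : ℝ)))).smul (hv.comp (x, 0) hfst))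
  refine h.congr_fderiv ?_
  ext p <;> simp [lineSweepFDeriv]

theorem lineSweepFDeriv_injective {L : E →L[ℝ] F} {w : E × F} (hw : ∀ u, w ≠ (u, L u)) :
    Injective (lineSweepFDeriv L w) := by
  refine (injective_iff_map_eq_zero _).2 fun ⟨u, s⟩ h => ?_
  rw [lineSweepFDeriv_apply] at h
  by_cases hs : s = 0
  · subst hs
    simp_all
  · refine absurd ?_ (hw (-s⁻¹ • u))
    rw [map_smul, ← Prod.smul_mk, eq_neg_of_add_eq_zero_left h, smul_neg, neg_smul, neg_neg,
      smul_smul, inv_mul_cancel₀ hs, one_smul]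

end LineSweep

theorem stmt_13_general (d m : ℕ)
    (Ω : Set (EuclideanSpace ℝ (Fin d))) (hΩ : IsOpen Ω)
    (f : EuclideanSpace ℝ (Fin d) → EuclideanSpace ℝ (Fin m))
    (hf : ContDiffOn ℝ 1 f Ω)
    (v : EuclideanSpace ℝ (Fin d) →
      EuclideanSpace ℝ (Fin d) × EuclideanSpace ℝ (Fin m))
    (hv : ContDiffOn ℝ 1 v Ω)
    (hnontang : ∃ x₀ ∈ Ω, v x₀ ∉
      {p : EuclideanSpace ℝ (Fin d) × EuclideanSpace ℝ (Fin m) |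
        ∃ u : EuclideanSpace ℝ (Fin d), p = (u, fderiv ℝ f x₀ u)}) :
    0 < μH[(d + 1 : ℝ)] {p : EuclideanSpace ℝ (Fin d) × EuclideanSpace ℝ (Fin m) |
        ∃ x ∈ Ω, ∃ t : ℝ, p = (x, f x) + t • v x} ∧
    (m = 1 → (interior {p : EuclideanSpace ℝ (Fin d) × EuclideanSpace ℝ (Fin m) |
        ∃ x ∈ Ω, ∃ t : ℝ, p = (x, f x) + t • v x}).Nonempty) := by
  obtain ⟨x₀, hx₀, hnt⟩ := hnontang
  have hΦ := hasStrictFDerivAt_lineSweep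
    ((hf.contDiffAt (hΩ.mem_nhds hx₀)).hasStrictFDerivAt one_ne_zero)
    ((hv.contDiffAt (hΩ.mem_nhds hx₀)).hasStrictFDerivAt one_ne_zero)
  have hinj := lineSweepFDeriv_injective fun u h => hnt ⟨u, h⟩
  have hU : Ω ×ˢ univ ∈ 𝓝 (x₀, (0 : ℝ)) := (hΩ.prod isOpen_univ).mem_nhds ⟨hx₀, trivial⟩
  have hsweep : lineSweep f v '' (Ω ×ˢ univ) ⊆
      {p | ∃ x ∈ Ω, ∃ t : ℝ, p = (x, f x) + t • v x} := by
    rintro _ ⟨⟨x, t⟩, ⟨hx, -⟩, rfl⟩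
    exact ⟨x, hx, t, rfl⟩
  constructor
  · have hpos := hΦ.hausdorffMeasure_image_pos_of_injective hinj hU
    simp only [finrank_prod, finrank_euclideanSpace_fin, finrank_self, Nat.cast_add,
      Nat.cast_one] at hpos
    exact hpos.trans_le (measure_mono hsweep)
  · rintro rfl
    have hnhds := hΦ.image_mem_nhds_of_injective_of_finrank_eq hinj
      (by simp only [finrank_prod, finrank_euclideanSpace_fin, finrank_self]) hU
    exact ⟨_, mem_interior_iff_mem_nhds.2 (mem_of_superset hnhds hsweep)⟩

/-- a C¹ line field along the graph of a C¹ map f : Ω ⊆ ℝ^d → ℝ^m that is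
somewhere non-tangent to the graph sweeps out a set of positive (d+1)-dimensional
Hausdorff measure; if moreover m = 1 the swept set has nonempty interior. -/
theorem stmt_13 (d m : ℕ) (hd : 1 ≤ d) (hm : 1 ≤ m)
    (Ω : Set (EuclideanSpace ℝ (Fin d))) (hΩ : IsOpen Ω)
    (f : EuclideanSpace ℝ (Fin d) → EuclideanSpace ℝ (Fin m))
    (hf : ContDiffOn ℝ 1 f Ω)
    (v : EuclideanSpace ℝ (Fin d) →
      EuclideanSpace ℝ (Fin d) × EuclideanSpace ℝ (Fin m))
    (hv : ContDiffOn ℝ 1 v Ω)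
    (hv0 : ∀ x ∈ Ω, v x ≠ 0)
    (hnontang : ∃ x₀ ∈ Ω, v x₀ ∉
      {p : EuclideanSpace ℝ (Fin d) × EuclideanSpace ℝ (Fin m) |
        ∃ u : EuclideanSpace ℝ (Fin d), p = (u, fderiv ℝ f x₀ u)}) :
    0 < μH[(d + 1 : ℝ)] {p : EuclideanSpace ℝ (Fin d) × EuclideanSpace ℝ (Fin m) |
        ∃ x ∈ Ω, ∃ t : ℝ, p = (x, f x) + t • v x} ∧
    (m = 1 → (interior {p : EuclideanSpace ℝ (Fin d) × EuclideanSpace ℝ (Fin m) |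
        ∃ x ∈ Ω, ∃ t : ℝ, p = (x, f x) + t • v x}).Nonempty) :=
  stmt_13_general d m Ω hΩ f hf v hv hnontang
end

section
/- Let f : I → ℝ be strictly convex and let v : I → ℝ² be a continuous map with v(t) ≠ 0 for every t ∈ I (so that t ↦ ℝ·v(t) is a continuous line field along the graph of f). Then the union of the corresponding affine lines through the graph, {(t, f(t)) + s·v(t) : t ∈ I, s ∈ ℝ} ⊆ ℝ², has nonempty interior. -/
open Real

lemma collin_aux (w u : ℝ × ℝ) (hu : u ≠ 0) (h : w.1 * u.2 - w.2 * u.1 = 0) :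
    ∃ s : ℝ, w = s • u := by
  have h' : w.1 * u.2 = w.2 * u.1 := by linarith
  rcases eq_or_ne u.1 0 with h1 | h1
  · have h2 : u.2 ≠ 0 := by
      intro h2
      exact hu (Prod.ext_iff.mpr ⟨h1, h2⟩)
    have hw1 : w.1 = 0 := by
      have : w.1 * u.2 = 0 := by rw [h', h1]; ring
      exact (mul_eq_zero.mp this).resolve_right h2
    refine ⟨w.2 / u.2, Prod.ext_iff.mpr ⟨?_, ?_⟩⟩
    · simp [hw1, h1]
    · simp only [Prod.smul_snd, smul_eq_mul]
      field_simp
  · refine ⟨w.1 / u.1, Prod.ext_iff.mpr ⟨?_, ?_⟩⟩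
    · simp only [Prod.smul_fst, smul_eq_mul]
      field_simp
    · simp only [Prod.smul_snd, smul_eq_mul]
      field_simp
      linarith

/-- for a strictly convex function f on I = (−π, π) and a continuous
nowhere-vanishing direction field v along its graph, the union of the affine lines
(t, f(t)) + ℝ·v(t) has nonempty interior in ℝ². -/
theorem stmt_17 (f : ℝ → ℝ) (hf : StrictConvexOn ℝ (Set.Ioo (-π) π) f)
    (v : ℝ → ℝ × ℝ) (hv : ContinuousOn v (Set.Ioo (-π) π))
    (hv0 : ∀ t ∈ Set.Ioo (-π) π, v t ≠ 0) :
    (interior {p : ℝ × ℝ |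
      ∃ t ∈ Set.Ioo (-π) π, ∃ s : ℝ, p = (t, f t) + s • v t}).Nonempty := by
  have hπ : (3:ℝ) < π := pi_gt_three
  have h0 : (0:ℝ) ∈ Set.Ioo (-π) π := ⟨by linarith, by linarith⟩
  have h1 : (1:ℝ) ∈ Set.Ioo (-π) π := ⟨by linarith, by linarith⟩
  have hm1 : (-1:ℝ) ∈ Set.Ioo (-π) π := ⟨by linarith, by linarith⟩
  have hfc : ContinuousOn f (Set.Ioo (-π) π) := hf.convexOn.continuousOn isOpen_Ioo
  set g : ℝ → ℝ × ℝ → ℝ := fun t q => (q.1 - t) * (v t).2 - (q.2 - f t) * (v t).1 with hg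
  set S := {p : ℝ × ℝ | ∃ t ∈ Set.Ioo (-π) π, ∃ s : ℝ, p = (t, f t) + s • v t} with hS
  have hgc : ∀ q : ℝ × ℝ, ContinuousOn (fun t => g t q) (Set.Ioo (-π) π) := by
    intro q
    apply ContinuousOn.sub
    · exact (continuousOn_const.sub continuousOn_id).mul (continuous_snd.comp_continuousOn hv)
    · exact (continuousOn_const.sub hfc).mul (continuous_fst.comp_continuousOn hv)
  have hmem : ∀ t ∈ Set.Ioo (-π) π, ∀ q : ℝ × ℝ, g t q = 0 → q ∈ S := by
    intro t ht q hq
    obtain ⟨s, hs⟩ := collin_aux (q - (t, f t)) (v t) (hv0 t ht) (by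
      simp only [Prod.fst_sub, Prod.snd_sub]
      exact hq)
    exact ⟨t, ht, s, by rw [← hs]; abel⟩
  obtain ⟨t1, ht1, t2, ht2, q0, hq0⟩ :
      ∃ t1 ∈ Set.Ioo (-π) π, ∃ t2 ∈ Set.Ioo (-π) π, ∃ q0 : ℝ × ℝ,
        g t1 q0 * g t2 q0 < 0 := by
    by_cases hpar : ∃ t ∈ Set.Ioo (-π) π, (v 0).1 * (v t).2 - (v 0).2 * (v t).1 ≠ 0
    · -- two non-parallel directions: solve a 2×2 linear system
      obtain ⟨t, ht, hD⟩ := hpar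
      set b1 := (v 0).1; set a1 := (v 0).2; set b2 := (v t).1; set a2 := (v t).2
      set D := b1 * a2 - a1 * b2 with hDdef
      have hD' : D ≠ 0 := by simpa [hDdef] using sub_ne_zero.mpr (fun h => hD (by linarith [sub_eq_zero.mpr h]))
      set r1 : ℝ := 1 - b1 * f 0
      set r2 : ℝ := -1 + a2 * t - b2 * f t
      refine ⟨0, h0, t, ht, ((-r1 * b2 + b1 * r2) / D, (a1 * r2 - a2 * r1) / D), ?_⟩
      have e1 : g 0 ((-r1 * b2 + b1 * r2) / D, (a1 * r2 - a2 * r1) / D) = 1 := by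
        simp only [hg]
        field_simp
        ring
      have e2 : g t ((-r1 * b2 + b1 * r2) / D, (a1 * r2 - a2 * r1) / D) = -1 := by
        simp only [hg]
        field_simp
        ring
      rw [e1, e2]; norm_num
    · -- all directions parallel to v 0
      push_neg at hpar
      have hvne := hv0 0 h0
      set b1 := (v 0).1 with hb1; set a1 := (v 0).2 with ha1
      -- find t2 with the graph point off the line through (0, f 0)
      have hkey : ∃ t2 ∈ Set.Ioo (-π) π, t2 * a1 - (f t2 - f 0) * b1 ≠ 0 := by
        by_contra hcon
        push_neg at hcon
        have e1 := hcon 1 h1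
        have e2 := hcon (-1) hm1
        have hb1ne : b1 ≠ 0 := by
          intro hb
          rw [hb] at e1
          have : a1 = 0 := by linarith
          exact hvne (Prod.ext_iff.mpr ⟨hb, this⟩)
        have hsum : f 1 + f (-1) - 2 * f 0 = 0 := by
          have : (f 1 + f (-1) - 2 * f 0) * b1 = 0 := by linarith
          exact (mul_eq_zero.mp this).resolve_right hb1ne
        have hconv := hf.2 hm1 h1 (by norm_num)
          (by norm_num : (0:ℝ) < 1/2) (by norm_num : (0:ℝ) < 1/2) (by norm_num)
        simp only [smul_eq_mul] at hconv
        norm_num at hconv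
        linarith
      obtain ⟨t2, ht2, hc⟩ := hkey
      set c : ℝ := t2 * a1 - (f t2 - f 0) * b1 with hcdef
      obtain ⟨l, hl⟩ := collin_aux (v t2) (v 0) hvne (by
        have := hpar t2 ht2
        linarith [this])
      have hlne : l ≠ 0 := by
        intro h
        rw [h, zero_smul] at hl
        exact hv0 t2 ht2 hl
      have hl1 : (v t2).1 = l * b1 := by rw [hl]; simp [hb1]
      have hl2 : (v t2).2 = l * a1 := by rw [hl]; simp [ha1]
      set μ : ℝ := if 0 < l then 1/2 else 2 with hμ
      refine ⟨0, h0, t2, ht2, (μ * t2, f 0 + μ * (f t2 - f 0)), ?_⟩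
      have e1 : g 0 (μ * t2, f 0 + μ * (f t2 - f 0)) = μ * c := by
        simp only [hg, hcdef]; ring
      have e2 : g t2 (μ * t2, f 0 + μ * (f t2 - f 0)) = (μ - 1) * l * c := by
        simp only [hg, hl1, hl2, hcdef]; ring
      rw [e1, e2]
      clear_value c
      have hc2 : 0 < c ^ 2 := pow_two_pos_of_ne_zero hc
      rcases lt_or_ge 0 l with hlpos | hlneg
      · have : μ = 1/2 := by rw [hμ, if_pos hlpos]
        rw [this]; nlinarith [mul_pos hlpos hc2]
      · have hlneg' : l < 0 := lt_of_le_of_ne hlneg hlne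
        have : μ = 2 := by rw [hμ, if_neg (not_lt.mpr hlneg)]
        rw [this]; nlinarith [mul_pos (neg_pos.mpr hlneg') hc2]
  set U := {q : ℝ × ℝ | g t1 q * g t2 q < 0} with hU
  have hgq : ∀ t : ℝ, Continuous fun q : ℝ × ℝ => g t q := by
    intro t
    simp only [hg]
    fun_prop
  have hUopen : IsOpen U := isOpen_lt (by fun_prop) continuous_const
  have hUsub : U ⊆ S := by
    intro q hq
    have hq' : g t1 q * g t2 q < 0 := hq
    have hsub : Set.uIcc t1 t2 ⊆ Set.Ioo (-π) π :=
      Set.ordConnected_Ioo.uIcc_subset ht1 ht2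
    have hivt := intermediate_value_uIcc ((hgc q).mono hsub)
    have h0mem : (0:ℝ) ∈ Set.uIcc (g t1 q) (g t2 q) := by
      rcases mul_neg_iff.mp hq' with ⟨ha, hb⟩ | ⟨ha, hb⟩
      · exact Set.mem_uIcc.mpr (Or.inr ⟨hb.le, ha.le⟩)
      · exact Set.mem_uIcc.mpr (Or.inl ⟨ha.le, hb.le⟩)
    obtain ⟨t, htmem, htq⟩ := hivt h0mem
    exact hmem t (hsub htmem) q htq
  exact ⟨q0, interior_maximal hUsub hUopen hq0⟩
end
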